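/- Let X be a real Hilbert space, let T be a closed densely defined linear operator in X, and let (E_n) be a bounding sequence for T such that for every n the everywhere-defined bounded operator TE_n : x ↦ T(E_n x) is normal, i.e. (TE_n)*(TE_n) = (TE_n)(TE_n)*. Then T is normal: the operators T*T and TT* are equal (they have the same domain and agree there). (Lemma 24, in the real Hilbert space setting) -/

import Mathlib

open scoped InnerProductSpace RealInnerProductSpace

namespace Stmt14

variable {X : Type*} [NormedAddCommGroup X] [InnerProductSpace ℝ X] [CompleteSpace X]

/-- Composition `S ∘ T` of two partially defined operators, with domain
`{x ∈ D(T) : T x ∈ D(S)}`. -/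
noncomputable def pComp (S T : X →ₗ.[ℝ] X) : X →ₗ.[ℝ] X where
  domain :=
  { carrier := {x | ∃ hx : x ∈ T.domain, T ⟨x, hx⟩ ∈ S.domain}
    add_mem' := by
      rintro x y ⟨hx, hx'⟩ ⟨hy, hy'⟩
      refine ⟨T.domain.add_mem hx hy, ?_⟩
      have e : (⟨x + y, T.domain.add_mem hx hy⟩ : T.domain) = ⟨x, hx⟩ + ⟨y, hy⟩ := rfl
      rw [e, T.map_add]
      exact S.domain.add_mem hx' hy'
    zero_mem' := by
      refine ⟨T.domain.zero_mem, ?_⟩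
      have e : (⟨(0 : X), T.domain.zero_mem⟩ : T.domain) = 0 := rfl
      rw [e, T.map_zero]
      exact S.domain.zero_mem
    smul_mem' := by
      rintro c x ⟨hx, hx'⟩
      refine ⟨T.domain.smul_mem c hx, ?_⟩
      have e : (⟨c • x, T.domain.smul_mem c hx⟩ : T.domain) = c • ⟨x, hx⟩ := rfl
      rw [e, T.map_smul]
      exact S.domain.smul_mem c hx' }
  toFun :=
  { toFun := fun x => S ⟨T ⟨x.1, x.2.choose⟩, x.2.choose_spec⟩
    map_add' := by
      rintro x y
      have eT : T ⟨(x + y : _), (x + y).2.choose⟩ = T ⟨x.1, x.2.choose⟩ + T ⟨y.1, y.2.choose⟩ := by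
        rw [show (⟨(x + y : _), (x + y).2.choose⟩ : T.domain)
            = ⟨x.1, x.2.choose⟩ + ⟨y.1, y.2.choose⟩ from Subtype.ext rfl, T.map_add]
      have eS : (⟨T ⟨(x + y : _), (x + y).2.choose⟩, (x + y).2.choose_spec⟩ : S.domain)
          = ⟨T ⟨x.1, x.2.choose⟩, x.2.choose_spec⟩ + ⟨T ⟨y.1, y.2.choose⟩, y.2.choose_spec⟩ :=
        Subtype.ext eT
      show S _ = S _ + S _
      rw [eS, S.map_add]
    map_smul' := by
      rintro c x
      have eT : T ⟨(c • x : _), (c • x).2.choose⟩ = c • T ⟨x.1, x.2.choose⟩ := by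
        rw [show (⟨(c • x : _), (c • x).2.choose⟩ : T.domain)
            = c • ⟨x.1, x.2.choose⟩ from Subtype.ext rfl, T.map_smul]
      have eS : (⟨T ⟨(c • x : _), (c • x).2.choose⟩, (c • x).2.choose_spec⟩ : S.domain)
          = c • ⟨T ⟨x.1, x.2.choose⟩, x.2.choose_spec⟩ :=
        Subtype.ext eT
      show S _ = c • S _
      rw [eS, S.map_smul] }

/-- `E` is a bounding projection for the partially defined operator `T`: `E` is an orthogonal
projection whose range is contained in `D(T)`, the everywhere-defined operator `x ↦ T (E x)`
is bounded, and `T (E x) = E (T x)` for every `x ∈ D(T)`. -/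
structure IsBoundingProjection (T : X →ₗ.[ℝ] X) (E : X →L[ℝ] X) : Prop where
  idem : IsIdempotentElem E
  selfAdjoint : IsSelfAdjoint E
  mem_domain : ∀ x, E x ∈ T.domain
  bounded : ∃ C : ℝ, ∀ x, ‖T ⟨E x, mem_domain x⟩‖ ≤ C * ‖x‖
  commutes : ∀ y : T.domain, E (T y) = T ⟨E y, mem_domain y⟩

/-- A bounding sequence for `T`: an increasing (in range) sequence of bounding projections
whose ranges have dense union. -/
structure IsBoundingSequence (T : X →ₗ.[ℝ] X) (E : ℕ → X →L[ℝ] X) : Prop where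
  bounding : ∀ n, IsBoundingProjection T (E n)
  mono : ∀ n, LinearMap.range (E n).toLinearMap ≤ LinearMap.range (E (n + 1)).toLinearMap
  dense_union : Dense (⋃ n, Set.range (E n))

/-!
Write `B n = T E n`. Since `E n` is self-adjoint and commutes with `T`, it maps `X` into `D(T†)`,
commutes with `T†` and satisfies `T† E n = (B n)†`, so `(E n)` is a bounding sequence for `T†` as
well. Normality of `B n` gives `‖T† E n y‖ = ‖T E n y‖`; hence for `x ∈ D(T)` the sequence
`T† (E n x)` is Cauchy because `T (E n x) = E n (T x)` is, and closedness of `T†` puts `x` in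
`D(T†)`; symmetrically `D(T†) ⊆ D(T)`. Finally, for `x ∈ D(T†T)`,
`T (E n (T† x)) = B n (B n)† x = (B n)† B n x = E n (T† T x)`, and closedness of `T` gives
`T† x ∈ D(T)` with `T T† x = T† T x`; the reverse inclusion is the same argument with `T` and `T†`
exchanged.
-/

open Filter Topology ContinuousLinearMap
open scoped LinearPMap

theorem _root_.CauchySeq.of_dist_eq {α β : Type*} [PseudoMetricSpace α] [PseudoMetricSpace β]
    {u : ℕ → α} {v : ℕ → β} (hv : CauchySeq v) (h : ∀ n m, dist (u n) (u m) = dist (v n) (v m)) :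
    CauchySeq u := by
  rw [Metric.cauchySeq_iff] at hv ⊢
  simpa only [h] using hv

theorem _root_.LinearPMap.IsClosed.exists_apply_eq_of_tendsto {R E F : Type*} [CommRing R]
    [AddCommGroup E] [AddCommGroup F] [Module R E] [Module R F] [TopologicalSpace E]
    [TopologicalSpace F] {T : E →ₗ.[R] F} (hT : T.IsClosed) {v : ℕ → T.domain} {x : E} {y : F}
    (hx : Tendsto (fun n => (v n : E)) atTop (𝓝 x)) (hy : Tendsto (fun n => T (v n)) atTop (𝓝 y)) :
    ∃ h : x ∈ T.domain, T ⟨x, h⟩ = y := by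
  obtain ⟨z, rfl, hz⟩ := T.mem_graph_iff.mp <|
    hT.mem_of_tendsto (hx.prodMk_nhds hy) (Eventually.of_forall fun n => T.mem_graph (v n))
  exact ⟨z.2, hz⟩

namespace IsBoundingProjection

variable {T : X →ₗ.[ℝ] X} {E : X →L[ℝ] X}

noncomputable def toCLM (h : IsBoundingProjection T E) : X →L[ℝ] X :=
  LinearMap.mkContinuousOfExistsBound
    (T.toFun.comp ((E : X →ₗ[ℝ] X).codRestrict T.domain h.mem_domain)) h.bounded

theorem toCLM_apply (h : IsBoundingProjection T E) (x : X) :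
    h.toCLM x = T ⟨E x, h.mem_domain x⟩ := rfl

theorem toCLM_apply_coe (h : IsBoundingProjection T E) (y : T.domain) : h.toCLM y = E (T y) :=
  (h.commutes y).symm

theorem apply_apply_self (h : IsBoundingProjection T E) (x : X) : E (E x) = E x :=
  congrArg (· x) h.idem.eq

theorem toCLM_apply_apply_self (h : IsBoundingProjection T E) (x : X) :
    h.toCLM (E x) = h.toCLM x := by
  simp only [toCLM_apply, h.apply_apply_self]

theorem mem_adjoint_domain (h : IsBoundingProjection T E) (x : X) : E x ∈ T†.domain :=
  LinearPMap.mem_adjoint_domain_of_exists _ ⟨ContinuousLinearMap.adjoint h.toCLM x, fun y => by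
    rw [adjoint_inner_left, toCLM_apply_coe]; exact (h.selfAdjoint.isSymmetric x (T y)).symm⟩

theorem adjoint_apply (h : IsBoundingProjection T E) (hT : Dense (T.domain : Set X)) (x : X) :
    T† ⟨E x, h.mem_adjoint_domain x⟩ = ContinuousLinearMap.adjoint h.toCLM x :=
  LinearPMap.adjoint_apply_eq hT _ fun y => by
    rw [adjoint_inner_left, toCLM_apply_coe]; exact (h.selfAdjoint.isSymmetric x (T y)).symm

theorem adjoint (h : IsBoundingProjection T E) (hT : Dense (T.domain : Set X)) :
    IsBoundingProjection T† E where
  idem := h.idem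
  selfAdjoint := h.selfAdjoint
  mem_domain := h.mem_adjoint_domain
  bounded := ⟨‖ContinuousLinearMap.adjoint h.toCLM‖, fun x => by
    rw [h.adjoint_apply hT]; exact le_opNorm _ _⟩
  commutes y := by
    rw [h.adjoint_apply hT]
    refine ext_inner_right ℝ fun v => ?_
    rw [adjoint_inner_left]
    exact (h.selfAdjoint.isSymmetric _ v).trans
      (LinearPMap.adjoint_isFormalAdjoint hT y ⟨E v, h.mem_domain v⟩)

theorem toCLM_adjoint (h : IsBoundingProjection T E) (hT : Dense (T.domain : Set X)) :
    (h.adjoint hT).toCLM = ContinuousLinearMap.adjoint h.toCLM :=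
  ContinuousLinearMap.ext (h.adjoint_apply hT)

end IsBoundingProjection

namespace IsBoundingSequence

variable {T S R : X →ₗ.[ℝ] X} {E : ℕ → X →L[ℝ] X}

theorem adjoint (hE : IsBoundingSequence T E) (hT : Dense (T.domain : Set X)) :
    IsBoundingSequence T† E where
  bounding n := (hE.bounding n).adjoint hT
  mono := hE.mono
  dense_union := hE.dense_union

theorem apply_apply_of_le (hE : IsBoundingSequence T E) {n m : ℕ} (hnm : n ≤ m) (x : X) :
    E m (E n x) = E n x := by
  obtain ⟨y, hy⟩ := monotone_nat_of_le_succ hE.mono hnm (LinearMap.mem_range_self _ x)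
  rw [← show E m y = E n x from hy]
  exact (hE.bounding m).apply_apply_self y

theorem toCLM_apply_of_le (hE : IsBoundingSequence T E) {n m : ℕ} (hnm : n ≤ m) (x : X) :
    (hE.bounding m).toCLM (E n x) = (hE.bounding n).toCLM x := by
  simp only [IsBoundingProjection.toCLM_apply, hE.apply_apply_of_le hnm]

theorem tendsto_apply (hE : IsBoundingSequence T E) (x : X) :
    Tendsto (fun n => E n x) atTop (𝓝 x) := by
  choose hU hEU using fun n => isStarProjection_iff_eq_starProjection_range.mp
    ⟨(hE.bounding n).idem, (hE.bounding n).selfAdjoint⟩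
  have hdense : ⊤ ≤ (⨆ n, (E n).range).topologicalClosure := by
    rw [top_le_iff, ← Submodule.dense_iff_topologicalClosure_eq_top]
    refine hE.dense_union.mono (Set.iUnion_subset fun n => ?_)
    rintro _ ⟨y, rfl⟩
    exact Submodule.mem_iSup_of_mem n (LinearMap.mem_range_self _ y)
  convert Submodule.starProjection_tendsto_self _ (monotone_nat_of_le_succ hE.mono) x hdense with n
  exact hEU n

theorem mem_domain_of_norm_eq (hS : IsBoundingSequence S E) (hR : IsBoundingSequence R E)
    (hRc : R.IsClosed) (hnorm : ∀ n y, ‖(hR.bounding n).toCLM y‖ = ‖(hS.bounding n).toCLM y‖)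
    {x : X} (hx : x ∈ S.domain) : x ∈ R.domain := by
  set B := fun n => (hS.bounding n).toCLM
  set C := fun n => (hR.bounding n).toCLM
  have hB : Tendsto (fun n => B n x) atTop (𝓝 (S ⟨x, hx⟩)) := by
    simpa only [B, (hS.bounding _).toCLM_apply_coe ⟨x, hx⟩] using hS.tendsto_apply (S ⟨x, hx⟩)
  have hdist_of_le : ∀ n m, n ≤ m → dist (C n x) (C m x) = dist (B n x) (B m x) := by
    intro n m hnm
    rw [dist_eq_norm, dist_eq_norm, ← hR.toCLM_apply_of_le hnm, ← hS.toCLM_apply_of_le hnm,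
      ← map_sub, ← map_sub, hnorm]
  have hdist : ∀ n m, dist (C n x) (C m x) = dist (B n x) (B m x) := fun n m =>
    (le_total n m).elim (hdist_of_le n m) fun h => by rw [dist_comm, hdist_of_le m n h, dist_comm]
  obtain ⟨y, hy⟩ := cauchySeq_tendsto_of_complete (hB.cauchySeq.of_dist_eq hdist)
  exact (hRc.exists_apply_eq_of_tendsto (v := fun n => ⟨E n x, (hR.bounding n).mem_domain x⟩)
    (hR.tendsto_apply x) hy).1

theorem mem_domain_apply_of_commute (hS : IsBoundingSequence S E) (hR : IsBoundingSequence R E)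
    (hSc : S.IsClosed) (hcomm : ∀ n, Commute (hS.bounding n).toCLM (hR.bounding n).toCLM)
    {x : X} (hxS : x ∈ S.domain) (hxR : x ∈ R.domain) (hSx : S ⟨x, hxS⟩ ∈ R.domain) :
    ∃ h : R ⟨x, hxR⟩ ∈ S.domain, S ⟨R ⟨x, hxR⟩, h⟩ = R ⟨S ⟨x, hxS⟩, hSx⟩ := by
  set B := fun n => (hS.bounding n).toCLM
  set C := fun n => (hR.bounding n).toCLM
  have happrox : ∀ n, S ⟨E n (R ⟨x, hxR⟩), (hS.bounding n).mem_domain _⟩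
      = E n (R ⟨S ⟨x, hxS⟩, hSx⟩) := fun n =>
    calc S ⟨E n (R ⟨x, hxR⟩), _⟩ = B n (E n (R ⟨x, hxR⟩)) :=
          ((hS.bounding n).toCLM_apply_apply_self _).symm
      _ = B n (C n x) := by rw [← (hR.bounding n).toCLM_apply_coe ⟨x, hxR⟩]
      _ = C n (B n x) := congrArg (· x) (hcomm n).eq
      _ = C n (E n (S ⟨x, hxS⟩)) := by rw [(hS.bounding n).toCLM_apply_coe ⟨x, hxS⟩]
      _ = E n (R ⟨S ⟨x, hxS⟩, hSx⟩) :=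
          ((hR.bounding n).toCLM_apply_apply_self _).trans
            ((hR.bounding n).toCLM_apply_coe ⟨_, hSx⟩)
  refine hSc.exists_apply_eq_of_tendsto
    (v := fun n => ⟨E n (R ⟨x, hxR⟩), (hS.bounding n).mem_domain _⟩) (hS.tendsto_apply _) ?_
  simpa only [happrox] using hR.tendsto_apply (R ⟨S ⟨x, hxS⟩, hSx⟩)

theorem pComp_le_pComp (hS : IsBoundingSequence S E) (hR : IsBoundingSequence R E)
    (hSc : S.IsClosed) (hcomm : ∀ n, Commute (hS.bounding n).toCLM (hR.bounding n).toCLM)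
    (hdom : S.domain ≤ R.domain) : pComp R S ≤ pComp S R := by
  refine ⟨fun x ⟨hxS, hSx⟩ => ?_, ?_⟩
  · exact ⟨hdom hxS, (hS.mem_domain_apply_of_commute hR hSc hcomm hxS (hdom hxS) hSx).1⟩
  · rintro ⟨x, hxS, hSx⟩ ⟨y, hyR, hRy⟩ (rfl : x = y)
    exact (hS.mem_domain_apply_of_commute hR hSc hcomm hxS hyR hSx).2.symm

end IsBoundingSequence

/-- Lemma 24 (real Hilbert space setting): if `T` is closed and densely defined and admits a
bounding sequence `(E n)` such that each everywhere-defined bounded operator `x ↦ T (E n x)` is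
normal, then `T` is normal, i.e. `T*T = TT*`. -/
theorem isNormal_of_boundingSequence_normal (T : X →ₗ.[ℝ] X) (hTclosed : T.IsClosed)
    (hTdense : Dense (T.domain : Set X)) (E : ℕ → X →L[ℝ] X)
    (hE : IsBoundingSequence T E)
    (hnormal : ∀ (n : ℕ) (B : X →L[ℝ] X),
      (∀ x, B x = T ⟨E n x, (hE.bounding n).mem_domain x⟩) →
      (ContinuousLinearMap.adjoint B).comp B = B.comp (ContinuousLinearMap.adjoint B)) :
    pComp T.adjoint T = pComp T T.adjoint := by
  have hE' := hE.adjoint hTdense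
  have hadj_closed : T†.IsClosed := LinearPMap.adjoint_isClosed hTdense
  have hstar (n : ℕ) : IsStarNormal (hE.bounding n).toCLM := ⟨hnormal n _ fun _ => rfl⟩
  have hcomm (n : ℕ) : Commute (hE.bounding n).toCLM (hE'.bounding n).toCLM := by
    rw [IsBoundingProjection.toCLM_adjoint _ hTdense]
    exact (hstar n).star_comm_self.symm
  have hnorm (n : ℕ) (y : X) : ‖(hE'.bounding n).toCLM y‖ = ‖(hE.bounding n).toCLM y‖ := by
    rw [IsBoundingProjection.toCLM_adjoint _ hTdense]
    exact (isStarNormal_iff_norm_eq_adjoint.mp (hstar n) y).symm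
  have hdom : T.domain = T†.domain := le_antisymm
    (fun _ => hE.mem_domain_of_norm_eq hE' hadj_closed hnorm)
    (fun _ => hE'.mem_domain_of_norm_eq hE hTclosed fun n y => (hnorm n y).symm)
  exact le_antisymm (hE.pComp_le_pComp hE' hTclosed hcomm hdom.le)
    (hE'.pComp_le_pComp hE hadj_closed (fun n => (hcomm n).symm) hdom.ge)

end Stmt14
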